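/- For any ξ ∈ F_q((T^{-1})) and any positive integer n, λ_n(ξ) = λ_n(ξ^p), where p is the characteristic. -/

import Mathlib

open Polynomial
open scoped Classical

namespace MahlerKoksmaFq

noncomputable section

variable (Fq : Type) [Field Fq] [Fintype Fq]

/-- `K Fq` models `F_q((T⁻¹))`: Laurent series in the variable `t = T⁻¹`. -/
abbrev K := LaurentSeries Fq

/-- The element `T` (the inverse of the Laurent-series variable `t = T⁻¹`). -/
def Tvar : K Fq := HahnSeries.single (-1 : ℤ) 1

/-- The absolute value `|ξ| = q^{-ν(ξ)}` on `F_q((T⁻¹))`. -/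
def absK (ξ : K Fq) : ℝ :=
  if ξ = 0 then 0 else (Fintype.card Fq : ℝ) ^ (-(HahnSeries.order ξ))

/-- The embedding of `F_q[T]` into `F_q((T⁻¹))`, sending `T` to `Tvar`. -/
def emb : Polynomial Fq →+* K Fq :=
  Polynomial.eval₂RingHom (algebraMap Fq (K Fq)) (Tvar Fq)

/-- Evaluation of `P ∈ F_q[T][X]` at `ξ ∈ F_q((T⁻¹))`. -/
def evalK (P : Polynomial (Polynomial Fq)) (ξ : K Fq) : K Fq :=
  P.eval₂ (emb Fq) ξ

/-- Height of a polynomial over `F_q[T]`: the maximum of the absolute values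
`q^{deg c}` of its coefficients. -/
def HP (P : Polynomial (Polynomial Fq)) : ℝ :=
  (Fintype.card Fq : ℝ) ^ (P.support.sup fun i => (P.coeff i).natDegree)

/-- `ξ` is algebraic (over `F_q[T]`) of degree at most `n`. -/
def IsAlgDegLe (ξ : K Fq) (n : ℕ) : Prop :=
  ∃ P : Polynomial (Polynomial Fq), P ≠ 0 ∧ P.natDegree ≤ n ∧ evalK Fq P ξ = 0

/-- `ξ` is algebraic over `F_q[T]`. -/
def IsAlgK (ξ : K Fq) : Prop :=
  ∃ P : Polynomial (Polynomial Fq), P ≠ 0 ∧ evalK Fq P ξ = 0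

/-- The degree of an algebraic element of `F_q((T⁻¹))`. -/
def degA (α : K Fq) : ℕ :=
  sInf {d | ∃ P : Polynomial (Polynomial Fq), P ≠ 0 ∧ P.natDegree = d ∧ evalK Fq P α = 0}

/-- The height of an algebraic element `α` of `F_q((T⁻¹))`: the least height of a
 nonzero annihilating polynomial of minimal degree (= height of the minimal
 defining polynomial over `F_q[T]`). -/
def HA (α : K Fq) : ℝ :=
  sInf {h | ∃ P : Polynomial (Polynomial Fq),
    P ≠ 0 ∧ P.natDegree = degA Fq α ∧ evalK Fq P α = 0 ∧ h = HP Fq P}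

/-- The defining set for Mahler's exponent `w_n`. -/
def wnSet (ξ : K Fq) (n : ℕ) : Set ℝ :=
  {w | {P : Polynomial (Polynomial Fq) |
      P.natDegree ≤ n ∧ 0 < absK Fq (evalK Fq P ξ) ∧
      absK Fq (evalK Fq P ξ) < HP Fq P ^ (-w)}.Infinite}

/-- Mahler's exponent `w_n(ξ)`. -/
def wn (ξ : K Fq) (n : ℕ) : EReal :=
  sSup ((fun w : ℝ => (w : EReal)) '' wnSet Fq ξ n)

/-- The defining set for `w_n^{sep}` (separable polynomials only). -/
def wnsepSet (ξ : K Fq) (n : ℕ) : Set ℝ :=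
  {w | {P : Polynomial (Polynomial Fq) |
      P.Separable ∧ P.natDegree ≤ n ∧ 0 < absK Fq (evalK Fq P ξ) ∧
      absK Fq (evalK Fq P ξ) < HP Fq P ^ (-w)}.Infinite}

/-- The exponent `w_n^{sep}(ξ)`. -/
def wnsep (ξ : K Fq) (n : ℕ) : EReal :=
  sSup ((fun w : ℝ => (w : EReal)) '' wnsepSet Fq ξ n)

/-- The defining set for Koksma's exponent `w_n^*` (approximation by algebraic
elements lying in `F_q((T⁻¹))`). -/
def wnstarSet (ξ : K Fq) (n : ℕ) : Set ℝ :=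
  {w | {α : K Fq | IsAlgK Fq α ∧ degA Fq α ≤ n ∧ 0 < absK Fq (ξ - α) ∧
      absK Fq (ξ - α) < HA Fq α ^ (-w - 1)}.Infinite}

/-- Koksma's exponent `w_n^*(ξ)`. -/
def wnstar (ξ : K Fq) (n : ℕ) : EReal :=
  sSup ((fun w : ℝ => (w : EReal)) '' wnstarSet Fq ξ n)

/-- The defining set for the uniform exponent `ŵ_n`. -/
def hwnSet (ξ : K Fq) (n : ℕ) : Set ℝ :=
  {w | ∃ H0 : ℝ, ∀ H : ℝ, H0 < H → ∃ P : Polynomial (Polynomial Fq),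
      P.natDegree ≤ n ∧ HP Fq P ≤ H ∧ 0 < absK Fq (evalK Fq P ξ) ∧
      absK Fq (evalK Fq P ξ) < H ^ (-w)}

/-- The uniform exponent `ŵ_n(ξ)`. -/
def hwn (ξ : K Fq) (n : ℕ) : EReal :=
  sSup ((fun w : ℝ => (w : EReal)) '' hwnSet Fq ξ n)

/-- The defining set for the uniform exponent `ŵ_n^{sep}` (separable polynomials only). -/
def hwnsepSet (ξ : K Fq) (n : ℕ) : Set ℝ :=
  {w | ∃ H0 : ℝ, ∀ H : ℝ, H0 < H → ∃ P : Polynomial (Polynomial Fq),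
      P.Separable ∧ P.natDegree ≤ n ∧ HP Fq P ≤ H ∧ 0 < absK Fq (evalK Fq P ξ) ∧
      absK Fq (evalK Fq P ξ) < H ^ (-w)}

/-- The uniform exponent `ŵ_n^{sep}(ξ)`. -/
def hwnsep (ξ : K Fq) (n : ℕ) : EReal :=
  sSup ((fun w : ℝ => (w : EReal)) '' hwnsepSet Fq ξ n)

/-- The fractional part of a Laurent series in `T⁻¹`: the part with only
 negative powers of `T` (positive powers of the series variable `t = T⁻¹`). -/
def fracPart (η : K Fq) : K Fq :=
  { coeff := fun m => if 0 < m then η.coeff m else 0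
    isPWO_support' := η.isPWO_support'.mono (fun m hm => by
      by_cases h : 0 < m
      · simpa [Function.mem_support, h] using hm
      · simp [Function.mem_support, h] at hm) }

/-- The fractional-part norm `‖η‖ = |η - [η]|`. -/
def fracNorm (η : K Fq) : ℝ := absK Fq (fracPart Fq η)

/-- `max{‖R(T)ξ‖, …, ‖R(T)ξⁿ‖}`. -/
def maxFrac (ξ : K Fq) (n : ℕ) (R : Polynomial Fq) : ℝ :=
  sSup ((fun i => fracNorm Fq (emb Fq R * ξ ^ i)) '' Set.Icc 1 n)

/-- The defining set for the exponent of simultaneous approximation `λ_n`. -/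
def lamSet (ξ : K Fq) (n : ℕ) : Set ℝ :=
  {l | {R : Polynomial Fq | 0 < maxFrac Fq ξ n R ∧
      maxFrac Fq ξ n R < (Fintype.card Fq : ℝ) ^ (-(l * R.natDegree))}.Infinite}

/-- The exponent of simultaneous approximation `λ_n(ξ)`. -/
def lam (ξ : K Fq) (n : ℕ) : EReal :=
  sSup ((fun w : ℝ => (w : EReal)) '' lamSet Fq ξ n)

/-- The defining set for the uniform exponent `λ̂_n`. -/
def hlamSet (ξ : K Fq) (n : ℕ) : Set ℝ :=
  {l | ∃ d0 : ℕ, ∀ d : ℕ, d0 < d → ∃ R : Polynomial Fq, R.natDegree ≤ d ∧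
      0 < maxFrac Fq ξ n R ∧
      maxFrac Fq ξ n R < (Fintype.card Fq : ℝ) ^ (-(l * d))}

/-- The uniform exponent `λ̂_n(ξ)`. -/
def hlam (ξ : K Fq) (n : ℕ) : EReal :=
  sSup ((fun w : ℝ => (w : EReal)) '' hlamSet Fq ξ n)

/-- An algebraic closure of `F_q((T⁻¹))`; its algebraic elements are exactly the
algebraic elements of the completion `C_∞`. -/
abbrev Kbar := AlgebraicClosure (K Fq)

/-- The embedding of `F_q[T]` into the algebraic closure. -/
def embbar : Polynomial Fq →+* Kbar Fq :=
  (algebraMap (K Fq) (Kbar Fq)).comp (emb Fq)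

/-- Evaluation of `P ∈ F_q[T][X]` at a point of the algebraic closure. -/
def evalKbar (P : Polynomial (Polynomial Fq)) (x : Kbar Fq) : Kbar Fq :=
  P.eval₂ (embbar Fq) x

/-- The unique extension of the absolute value of `F_q((T⁻¹))` to its algebraic
closure: `|x| = |N(x)|^{1/d} = |a_0|^{1/d}` where `a_0` is the constant term and
`d` the degree of the minimal polynomial of `x` over `F_q((T⁻¹))`. -/
def absC (x : Kbar Fq) : ℝ :=
  absK Fq ((minpoly (K Fq) x).coeff 0) ^ ((1 : ℝ) / (minpoly (K Fq) x).natDegree)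

/-- `x ∈ C_∞` is algebraic over `F_q[T]`. -/
def IsAlgKbar (x : Kbar Fq) : Prop :=
  ∃ P : Polynomial (Polynomial Fq), P ≠ 0 ∧ evalKbar Fq P x = 0

/-- Degree over `F_q[T]` of an algebraic element of `C_∞`. -/
def degAbar (x : Kbar Fq) : ℕ :=
  sInf {d | ∃ P : Polynomial (Polynomial Fq), P ≠ 0 ∧ P.natDegree = d ∧ evalKbar Fq P x = 0}

/-- Height of an algebraic element of `C_∞`. -/
def HAbar (x : Kbar Fq) : ℝ :=
  sInf {h | ∃ P : Polynomial (Polynomial Fq),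
    P ≠ 0 ∧ P.natDegree = degAbar Fq x ∧ evalKbar Fq P x = 0 ∧ h = HP Fq P}

/-- The defining set for the exponent `w_n^@` (approximation by algebraic
elements of `C_∞`). -/
def wnAtSet (ξ : K Fq) (n : ℕ) : Set ℝ :=
  {w | {α : Kbar Fq | IsAlgKbar Fq α ∧ degAbar Fq α ≤ n ∧
      0 < absC Fq (algebraMap (K Fq) (Kbar Fq) ξ - α) ∧
      absC Fq (algebraMap (K Fq) (Kbar Fq) ξ - α) < HAbar Fq α ^ (-w - 1)}.Infinite}

/-- The exponent `w_n^@(ξ)`. -/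
def wnAt (ξ : K Fq) (n : ℕ) : EReal :=
  sSup ((fun w : ℝ => (w : EReal)) '' wnAtSet Fq ξ n)

/-- The defining set for the uniform exponent `ŵ_n^@`. -/
def hwnAtSet (ξ : K Fq) (n : ℕ) : Set ℝ :=
  {w | ∃ H0 : ℝ, ∀ H : ℝ, H0 < H → ∃ α : Kbar Fq, IsAlgKbar Fq α ∧ degAbar Fq α ≤ n ∧
      HAbar Fq α ≤ H ∧ 0 < absC Fq (algebraMap (K Fq) (Kbar Fq) ξ - α) ∧
      absC Fq (algebraMap (K Fq) (Kbar Fq) ξ - α) < (HAbar Fq α)⁻¹ * H ^ (-w)}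

/-- The uniform exponent `ŵ_n^@(ξ)`. -/
def hwnAt (ξ : K Fq) (n : ℕ) : EReal :=
  sSup ((fun w : ℝ => (w : EReal)) '' hwnAtSet Fq ξ n)

/-- `w(ξ) = limsup_n w_n(ξ)/n`. -/
def wlim (ξ : K Fq) : EReal :=
  Filter.atTop.limsup fun n : ℕ => wn Fq ξ n * (((n : ℝ)⁻¹ : ℝ) : EReal)

/-- `w^*(ξ) = limsup_n w_n^*(ξ)/n`. -/
def wlimstar (ξ : K Fq) : EReal :=
  Filter.atTop.limsup fun n : ℕ => wnstar Fq ξ n * (((n : ℝ)⁻¹ : ℝ) : EReal)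

/-- Height of a polynomial over `C_∞`: maximum of the absolute values of its
coefficients. -/
def HC (P : Polynomial (Kbar Fq)) : ℝ :=
  sSup ((fun i => absC Fq (P.coeff i)) '' Set.Iic P.natDegree)

/-!
The Frobenius `η ↦ η^p` is additive and multiplies orders by `p`, so `‖η^p‖ = ‖η‖^p`; hence
`R ↦ R^p` turns solutions of exponent `λ` for `ξ` into solutions of exponent `λ` for `ξ^p`.

Conversely, write `R = ∑_{k<p} T^k R_k^p`, so that `R ξ^{pi} = ∑_k T^k (R_k ξ^i)^p` and
`p deg R_k ≤ deg R`. The fractional parts of the summands have orders in distinct classes mod `p`,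
so `‖R ξ^{pi}‖ ≥ ‖R_k ξ^i‖^p` for every `k`. Thus each solution `R` for `ξ^p` is assembled from
`p` solutions (or zeros) for `ξ`, and infinitely many of the former give infinitely many of the
latter. This breaks down only if some nonzero `R_k` is a common denominator of `ξ, …, ξ^n`; then
the nonzero values of `max_i ‖R ξ^i‖` are bounded below, so only exponents `λ ≤ 0` occur, and for
those the condition just says that `R` avoids the proper subgroup of common denominators.
-/

variable {Fq}

section LaurentSeries

omit [Fintype Fq]

/-- Laurent series without negative powers of `T`; this is the image of `F_q[T]`, the analogue
of `ℤ ⊆ ℝ`. -/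
def integralSubring : Subring (K Fq) where
  carrier := {η | ∀ m : ℤ, 0 < m → η.coeff m = 0}
  mul_mem' {x y} hx hy m hm := by
    by_contra h
    obtain ⟨i, hi, j, hj, rfl⟩ :=
      HahnSeries.support_mul_subset ((HahnSeries.mem_support _ _).2 h)
    have : i ≤ 0 := not_lt.mp fun h' => hi (hx i h')
    have : j ≤ 0 := not_lt.mp fun h' => hj (hy j h')
    have : 0 < i + j := hm
    omega
  one_mem' m hm := by rw [HahnSeries.coeff_one, if_neg hm.ne']
  add_mem' hx hy m hm := by rw [HahnSeries.coeff_add, hx m hm, hy m hm, add_zero]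
  zero_mem' _ _ := HahnSeries.coeff_zero
  neg_mem' hx m hm := by rw [HahnSeries.coeff_neg, hx m hm, neg_zero]

lemma single_mem_integralSubring {a : ℤ} (ha : a ≤ 0) (r : Fq) :
    HahnSeries.single a r ∈ integralSubring := fun m hm => by
  rw [HahnSeries.coeff_single, if_neg (by omega)]

lemma coeff_fracPart (η : K Fq) (m : ℤ) :
    (fracPart Fq η).coeff m = if 0 < m then η.coeff m else 0 := rfl

lemma fracPart_add (x y : K Fq) : fracPart Fq (x + y) = fracPart Fq x + fracPart Fq y := by
  ext m
  simp only [coeff_fracPart, HahnSeries.coeff_add]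
  split_ifs <;> simp

lemma fracPart_sum {ι : Type*} (s : Finset ι) (g : ι → K Fq) :
    fracPart Fq (∑ i ∈ s, g i) = ∑ i ∈ s, fracPart Fq (g i) :=
  map_sum (AddMonoidHom.mk' (fracPart Fq) fracPart_add) g s

lemma fracPart_eq_zero_iff {η : K Fq} : fracPart Fq η = 0 ↔ η ∈ integralSubring := by
  refine ⟨fun h m hm => ?_, fun h => ?_⟩
  · simpa [coeff_fracPart, hm] using congrArg (HahnSeries.coeff · m) h
  · ext m
    by_cases hm : 0 < m <;> simp [coeff_fracPart, hm, h m]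

lemma sub_fracPart_mem (η : K Fq) : η - fracPart Fq η ∈ integralSubring := fun m hm => by
  rw [HahnSeries.coeff_sub, coeff_fracPart, if_pos hm, sub_self]

lemma one_le_orderTop_fracPart (η : K Fq) : 1 ≤ (fracPart Fq η).orderTop :=
  HahnSeries.le_orderTop_iff_forall.mpr fun _ hm =>
    if_neg (not_lt.mpr (Int.lt_add_one_iff.mp (WithTop.coe_lt_coe.mp hm)))

lemma fracPart_eq_self {η : K Fq} (h : 1 ≤ η.orderTop) : fracPart Fq η = η := by
  ext m
  rw [coeff_fracPart]
  split_ifs with hm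
  · rfl
  · exact (HahnSeries.le_orderTop_iff_forall.mp h m (WithTop.coe_lt_coe.mpr (by omega))).symm

lemma fracPart_add_of_mem {x y : K Fq} (hx : x ∈ integralSubring) (hy : 1 ≤ y.orderTop) :
    fracPart Fq (x + y) = y := by
  rw [fracPart_add, fracPart_eq_zero_iff.mpr hx, zero_add, fracPart_eq_self hy]

lemma Tvar_pow_eq_single (j : ℕ) : Tvar Fq ^ j = HahnSeries.single (-(j : ℤ)) 1 := by
  rw [Tvar, HahnSeries.single_pow, one_pow, smul_neg, nsmul_one]

lemma Tvar_mem_integralSubring : Tvar Fq ∈ integralSubring :=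
  single_mem_integralSubring (by norm_num) 1

lemma order_Tvar_pow_mul_pow {f : K Fq} (hf : f ≠ 0) (j m : ℕ) :
    (Tvar Fq ^ j * f ^ m).order = m * f.order - j := by
  rw [Tvar_pow_eq_single, HahnSeries.order_mul (HahnSeries.single_ne_zero one_ne_zero)
    (pow_ne_zero m hf), HahnSeries.order_single one_ne_zero, HahnSeries.order_pow, nsmul_eq_mul]
  ring

lemma emb_X : emb Fq X = Tvar Fq := by simp [emb]

lemma emb_eq_sum (R : Polynomial Fq) :
    emb Fq R = ∑ k ∈ R.support, HahnSeries.single (-(k : ℤ)) (R.coeff k) := by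
  rw [emb, coe_eval₂RingHom, eval₂_eq_sum, Polynomial.sum]
  refine Finset.sum_congr rfl fun k _ => ?_
  rw [Tvar_pow_eq_single, LaurentSeries.algebraMap_apply, HahnSeries.C_apply,
    HahnSeries.single_mul_single, mul_one, zero_add]

lemma coeff_emb_neg (R : Polynomial Fq) (k : ℕ) : (emb Fq R).coeff (-(k : ℤ)) = R.coeff k := by
  rw [emb_eq_sum, HahnSeries.coeff_sum, Finset.sum_eq_single k]
  · rw [HahnSeries.coeff_single_same]
  · intro j _ hjk
    exact HahnSeries.coeff_single_of_ne (by omega)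
  · intro hk
    rw [HahnSeries.coeff_single_same, notMem_support_iff.mp hk]

lemma emb_injective : Function.Injective (emb Fq) :=
  (injective_iff_map_eq_zero _).mpr fun R hR => Polynomial.ext fun k => by
    rw [← coeff_emb_neg, hR, HahnSeries.coeff_zero, coeff_zero]

lemma emb_mem_integralSubring (R : Polynomial Fq) : emb Fq R ∈ integralSubring := by
  rw [emb_eq_sum]
  exact sum_mem fun k _ => single_mem_integralSubring (by omega) _

def denominators (ξ : K Fq) (n : ℕ) : AddSubgroup (Polynomial Fq) where
  carrier := {R | ∀ i ∈ Set.Icc 1 n, emb Fq R * ξ ^ i ∈ integralSubring}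
  add_mem' hR hS i hi := by
    rw [map_add, add_mul]
    exact add_mem (hR i hi) (hS i hi)
  zero_mem' i _ := by
    rw [map_zero, zero_mul]
    exact zero_mem _
  neg_mem' hR i hi := by
    rw [map_neg, neg_mul]
    exact neg_mem (hR i hi)

lemma pow_mem_denominators_pow {ξ : K Fq} {n : ℕ} {B : Polynomial Fq}
    (hB : B ∈ denominators ξ n) (m : ℕ) :
    B ^ m ∈ denominators (ξ ^ m) n := fun i hi => by
  rw [map_pow, ← pow_mul, mul_comm m i, pow_mul, ← mul_pow]
  exact pow_mem (hB i hi) m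

lemma denominators_pow_eq_top {ξ : K Fq} {n : ℕ} (hn : 1 ≤ n) (h : denominators ξ n = ⊤)
    (m : ℕ) :
    denominators (ξ ^ m) n = ⊤ := by
  have hξ : ξ ∈ integralSubring := by
    simpa using (h ▸ AddSubgroup.mem_top 1 : (1 : Polynomial Fq) ∈ denominators ξ n) 1
      ⟨le_rfl, hn⟩
  exact eq_top_iff.mpr fun R _ i _ =>
    mul_mem (emb_mem_integralSubring R) (pow_mem (pow_mem hξ m) i)

instance (p : ℕ) [CharP Fq p] : CharP (K Fq) p :=
  charP_of_injective_algebraMap (algebraMap Fq (K Fq)).injective p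

-- Frobenius splits `η = [η] + {η}`, and `T^j {η}^p` still has no nonnegative power of `T`.
lemma fracPart_Tvar_pow_mul_pow (p : ℕ) [Fact p.Prime] [CharP Fq p] {j : ℕ} (hj : j < p)
    (η : K Fq) : fracPart Fq (Tvar Fq ^ j * η ^ p) = Tvar Fq ^ j * fracPart Fq η ^ p := by
  set f := fracPart Fq η
  have hsplit : Tvar Fq ^ j * η ^ p = Tvar Fq ^ j * (η - f) ^ p + Tvar Fq ^ j * f ^ p := by
    rw [← mul_add, ← add_pow_char, sub_add_cancel]
  rw [hsplit]
  refine fracPart_add_of_mem (mul_mem (pow_mem Tvar_mem_integralSubring j)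
    (pow_mem (sub_fracPart_mem η) p)) ?_
  rcases eq_or_ne f 0 with hf | hf
  · simp [hf, zero_pow (Fact.out : p.Prime).ne_zero]
  have hprod : Tvar Fq ^ j * f ^ p ≠ 0 :=
    mul_ne_zero (pow_ne_zero j (HahnSeries.single_ne_zero one_ne_zero)) (pow_ne_zero p hf)
  have hf1 : 1 ≤ f.order := by
    have := one_le_orderTop_fracPart η
    rwa [← HahnSeries.order_eq_orderTop_of_ne_zero hf, ← WithTop.coe_one,
      WithTop.coe_le_coe] at this
  rw [← HahnSeries.order_eq_orderTop_of_ne_zero hprod, ← WithTop.coe_one, WithTop.coe_le_coe,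
    order_Tvar_pow_mul_pow hf]
  have : (p : ℤ) ≤ p * f.order := le_mul_of_one_le_right (by positivity) hf1
  omega

end LaurentSeries

theorem _root_.HahnSeries.orderTop_sum_eq_inf {Γ R ι : Type*} [LinearOrder Γ] [AddCommMonoid R]
    {s : Finset ι} {g : ι → HahnSeries Γ R}
    (h : ∀ i ∈ s, ∀ j ∈ s, g i ≠ 0 → (g i).orderTop = (g j).orderTop → i = j) :
    (∑ i ∈ s, g i).orderTop = s.inf fun i => (g i).orderTop := by
  induction s using Finset.induction_on with
  | empty => simp
  | insert a s ha ih =>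
    have ih := ih fun i hi j hj => h i (Finset.mem_insert_of_mem hi) j (Finset.mem_insert_of_mem hj)
    rw [Finset.sum_insert ha, Finset.inf_insert]
    rcases lt_trichotomy (g a).orderTop (∑ i ∈ s, g i).orderTop with hlt | heq | hgt
    · rw [HahnSeries.orderTop_add_eq_left hlt, ← ih, min_eq_left hlt.le]
    · rcases eq_or_ne (g a) 0 with hga | hga
      · rw [hga, zero_add, ih, HahnSeries.orderTop_zero, top_inf_eq]
      obtain ⟨j, hj, hjeq⟩ := Finset.exists_mem_eq_inf' (s := s)
        (Finset.nonempty_iff_ne_empty.mpr fun hs => by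
          simp [hs, HahnSeries.orderTop_ne_top.mpr hga] at heq)
        (fun i => (g i).orderTop)
      rw [Finset.inf'_eq_inf, ← ih] at hjeq
      exact absurd (h a (Finset.mem_insert_self a s) j (Finset.mem_insert_of_mem hj) hga
        (heq.trans hjeq) ▸ hj) ha
    · rw [HahnSeries.orderTop_add_eq_right hgt, ← ih, min_eq_right hgt.le]

section PthRootDecomposition

open Polynomial

variable {R : Type*} [CommSemiring R] (p : ℕ) [ExpChar R p] [PerfectRing R p]

/-- The polynomial `f_k` in the decomposition `f = ∑_{k < p} X^k f_k^p` of `f` over `R[X]^p`. -/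
def _root_.Polynomial.pthRootPart (f : R[X]) (k : ℕ) : R[X] :=
  ∑ m ∈ f.support with m % p = k, C ((frobeniusEquiv R p).symm (f.coeff m)) * X ^ (m / p)

lemma _root_.Polynomial.sum_X_pow_mul_pthRootPart_pow (f : R[X]) :
    ∑ k ∈ Finset.range p, X ^ k * f.pthRootPart p k ^ p = f := by
  have hterm : ∀ k, X ^ k * f.pthRootPart p k ^ p =
      ∑ m ∈ f.support with m % p = k, C (f.coeff m) * X ^ m := by
    intro k
    rw [pthRootPart, sum_pow_char, Finset.mul_sum]
    refine Finset.sum_congr rfl fun m hm => ?_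
    rw [mul_pow, ← C_pow, frobeniusEquiv_symm_pow_p, ← pow_mul, mul_left_comm, ← pow_add,
      ← (Finset.mem_filter.mp hm).2, Nat.mod_add_div']
  simp_rw [hterm]
  rw [Finset.sum_fiberwise_of_maps_to fun m _ =>
    Finset.mem_range.mpr (Nat.mod_lt m (expChar_pos R p))]
  exact f.as_sum_support_C_mul_X_pow.symm

lemma _root_.Polynomial.mul_natDegree_pthRootPart_le (f : R[X]) (k : ℕ) :
    p * (f.pthRootPart p k).natDegree ≤ f.natDegree := by
  refine le_trans (Nat.mul_le_mul_left p (natDegree_sum_le_of_forall_le _ _ fun m hm => ?_))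
    (Nat.mul_div_le f.natDegree p)
  exact (natDegree_C_mul_X_pow_le _ _).trans
    (Nat.div_le_div_right (le_natDegree_of_mem_supp m (Finset.mem_filter.mp hm).1))

end PthRootDecomposition

lemma _root_.Polynomial.finite_setOf_natDegree_le {R : Type*} [Semiring R] [Finite R] (d : ℕ) :
    {f : Polynomial R | f.natDegree ≤ d}.Finite := by
  have : Finite (degreeLT R (d + 1)) := .of_equiv _ (degreeLTEquiv R (d + 1)).toEquiv.symm
  exact (degreeLT R (d + 1) : Set (Polynomial R)).toFinite.subset fun f hf =>
    mem_degreeLT.mpr ((degree_le_natDegree.trans (WithBot.coe_le_coe.mpr hf)).trans_lt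
      (WithBot.coe_lt_coe.mpr d.lt_succ_self))

-- A translate `g + H` with `g ∉ H` lies in the complement of `H`.
lemma _root_.AddSubgroup.infinite_compl {G : Type*} [AddGroup G] [Infinite G] {H : AddSubgroup G}
    (hH : H ≠ ⊤) : ((H : Set G)ᶜ).Infinite := by
  obtain ⟨g, hg⟩ : ∃ g, g ∉ H := by
    by_contra! h
    exact hH (eq_top_iff.mpr fun g _ => h g)
  by_cases hfin : (H : Set G).Finite
  · exact hfin.infinite_compl
  refine Set.Infinite.mono ?_ (Set.Infinite.image (add_right_injective g).injOn hfin)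
  rintro _ ⟨h, hh, rfl⟩ hgh
  exact hg (by simpa using H.sub_mem hgh hh)

section AbsoluteValue

variable (Fq) in
lemma one_lt_card : (1 : ℝ) < Fintype.card Fq := by exact_mod_cast Fintype.one_lt_card

@[simp]
lemma absK_zero : absK Fq 0 = 0 := if_pos rfl

lemma absK_of_ne_zero {x : K Fq} (hx : x ≠ 0) :
    absK Fq x = (Fintype.card Fq : ℝ) ^ (-x.order) := if_neg hx

lemma absK_pos {x : K Fq} (hx : x ≠ 0) : 0 < absK Fq x := by
  rw [absK_of_ne_zero hx]
  exact zpow_pos (by positivity) _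

lemma absK_nonneg (x : K Fq) : 0 ≤ absK Fq x := by
  rcases eq_or_ne x 0 with rfl | hx
  · rw [absK_zero]
  · exact (absK_pos hx).le

lemma absK_mul (x y : K Fq) : absK Fq (x * y) = absK Fq x * absK Fq y := by
  rcases eq_or_ne x 0 with rfl | hx
  · simp
  rcases eq_or_ne y 0 with rfl | hy
  · simp
  rw [absK_of_ne_zero (mul_ne_zero hx hy), absK_of_ne_zero hx, absK_of_ne_zero hy,
    HahnSeries.order_mul hx hy, neg_add, zpow_add₀ (by positivity)]

lemma absK_one : absK Fq 1 = 1 := by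
  rw [absK_of_ne_zero one_ne_zero, HahnSeries.order_one, neg_zero, zpow_zero]

lemma absK_pow (x : K Fq) (m : ℕ) : absK Fq (x ^ m) = absK Fq x ^ m := by
  induction m with
  | zero => simp [absK_one]
  | succ m ih => rw [pow_succ, absK_mul, ih, pow_succ]

lemma absK_le_absK_of_orderTop_le {x y : K Fq} (h : x.orderTop ≤ y.orderTop) :
    absK Fq y ≤ absK Fq x := by
  rcases eq_or_ne y 0 with rfl | hy
  · simpa using absK_nonneg x
  have hx : x ≠ 0 := HahnSeries.orderTop_ne_top.mp
    (ne_top_of_le_ne_top (HahnSeries.orderTop_ne_top.mpr hy) h)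
  rw [← HahnSeries.order_eq_orderTop_of_ne_zero hx,
    ← HahnSeries.order_eq_orderTop_of_ne_zero hy, WithTop.coe_le_coe] at h
  rw [absK_of_ne_zero hx, absK_of_ne_zero hy]
  exact zpow_le_zpow_right₀ (one_lt_card Fq).le (neg_le_neg h)

lemma one_le_absK {x : K Fq} (hx : x ∈ integralSubring) (hx0 : x ≠ 0) : 1 ≤ absK Fq x := by
  have horder : x.order ≤ 0 := not_lt.mp fun h =>
    HahnSeries.coeff_order_eq_zero.not.mpr hx0 (hx _ h)
  rw [absK_of_ne_zero hx0]
  exact one_le_zpow₀ (one_lt_card Fq).le (by omega)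

lemma absK_Tvar_pow (j : ℕ) : absK Fq (Tvar Fq ^ j) = (Fintype.card Fq : ℝ) ^ j := by
  rw [absK_pow, Tvar, absK_of_ne_zero (HahnSeries.single_ne_zero one_ne_zero),
    HahnSeries.order_single one_ne_zero, neg_neg, zpow_one]

-- The terms `T^j η_j^m` (`j < m`) have pairwise distinct orders, since these differ mod `m`.
lemma absK_pow_le_absK_sum (η : ℕ → K Fq) {m k : ℕ} (hk : k < m) :
    absK Fq (η k) ^ m ≤ absK Fq (∑ j ∈ Finset.range m, Tvar Fq ^ j * η j ^ m) := by
  have hm : m ≠ 0 := by omega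
  have hinj : ∀ i ∈ Finset.range m, ∀ j ∈ Finset.range m, Tvar Fq ^ i * η i ^ m ≠ 0 →
      (Tvar Fq ^ i * η i ^ m).orderTop = (Tvar Fq ^ j * η j ^ m).orderTop → i = j := by
    intro i hi j hj hgi heq
    have hgj := HahnSeries.orderTop_ne_top.mp (heq ▸ HahnSeries.orderTop_ne_top.mpr hgi)
    have hηi : η i ≠ 0 := by rintro h; simp [h, zero_pow hm] at hgi
    have hηj : η j ≠ 0 := by rintro h; simp [h, zero_pow hm] at hgj
    rw [← HahnSeries.order_eq_orderTop_of_ne_zero hgi,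
      ← HahnSeries.order_eq_orderTop_of_ne_zero hgj, WithTop.coe_inj,
      order_Tvar_pow_mul_pow hηi, order_Tvar_pow_mul_pow hηj] at heq
    have hdvd : (m : ℤ) ∣ (i : ℤ) - j :=
      ⟨(η i).order - (η j).order, by rw [mul_sub]; linarith⟩
    rw [Finset.mem_range] at hi hj
    have := Int.eq_zero_of_abs_lt_dvd hdvd (abs_sub_lt_iff.mpr ⟨by omega, by omega⟩)
    omega
  calc absK Fq (η k) ^ m
      ≤ (Fintype.card Fq : ℝ) ^ k * absK Fq (η k) ^ m :=
        le_mul_of_one_le_left (pow_nonneg (absK_nonneg _) m) (one_le_pow₀ (one_lt_card Fq).le)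
    _ = absK Fq (Tvar Fq ^ k * η k ^ m) := by rw [absK_mul, absK_Tvar_pow, absK_pow]
    _ ≤ _ := absK_le_absK_of_orderTop_le ((HahnSeries.orderTop_sum_eq_inf hinj).trans_le
        (Finset.inf_le (Finset.mem_range.mpr hk)))

end AbsoluteValue

section FractionalNorm

lemma fracNorm_nonneg (η : K Fq) : 0 ≤ fracNorm Fq η := absK_nonneg _

lemma fracNorm_eq_zero_iff {η : K Fq} : fracNorm Fq η = 0 ↔ η ∈ integralSubring := by
  rw [← fracPart_eq_zero_iff, fracNorm]
  exact ⟨fun h => by_contra fun hne => (absK_pos hne).ne' h, fun h => by rw [h, absK_zero]⟩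

lemma fracNorm_lt_one (η : K Fq) : fracNorm Fq η < 1 := by
  have hsingle : (HahnSeries.single (1 : ℤ) (1 : Fq)).orderTop ≤ (fracPart Fq η).orderTop := by
    rw [HahnSeries.orderTop_single one_ne_zero]
    exact one_le_orderTop_fracPart η
  refine (absK_le_absK_of_orderTop_le hsingle).trans_lt ?_
  rw [absK_of_ne_zero (HahnSeries.single_ne_zero one_ne_zero),
    HahnSeries.order_single one_ne_zero, zpow_neg_one]
  exact inv_lt_one_of_one_lt₀ (one_lt_card Fq)

-- `x {η} = x η - x [η]` is a nonzero element of `F_q[T]`, so `|x| ‖η‖ ≥ 1`.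
lemma inv_absK_le_fracNorm {x η : K Fq} (hx : x ∈ integralSubring) (hx0 : x ≠ 0)
    (hxη : x * η ∈ integralSubring) (hη : η ∉ integralSubring) :
    (absK Fq x)⁻¹ ≤ fracNorm Fq η := by
  have hmem : x * fracPart Fq η ∈ integralSubring := by
    rw [show x * fracPart Fq η = x * η - x * (η - fracPart Fq η) by ring]
    exact sub_mem hxη (mul_mem hx (sub_fracPart_mem η))
  have hne : x * fracPart Fq η ≠ 0 := mul_ne_zero hx0 (mt fracPart_eq_zero_iff.mp hη)
  rw [inv_le_iff_one_le_mul₀' (absK_pos hx0), fracNorm, ← absK_mul]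
  exact one_le_absK hmem hne

variable (p : ℕ) [Fact p.Prime] [CharP Fq p]

lemma fracNorm_pow_char (η : K Fq) : fracNorm Fq (η ^ p) = fracNorm Fq η ^ p := by
  simpa [fracNorm, absK_pow] using
    congrArg (absK Fq) (fracPart_Tvar_pow_mul_pow p (Fact.out : p.Prime).pos η)

lemma fracNorm_pow_le_fracNorm_sum (η : ℕ → K Fq) {k : ℕ} (hk : k < p) :
    fracNorm Fq (η k) ^ p ≤ fracNorm Fq (∑ j ∈ Finset.range p, Tvar Fq ^ j * η j ^ p) := by
  rw [fracNorm, fracNorm, fracPart_sum, Finset.sum_congr rfl fun j hj =>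
    fracPart_Tvar_pow_mul_pow p (Finset.mem_range.mp hj) (η j)]
  exact absK_pow_le_absK_sum (fun j => fracPart Fq (η j)) hk

end FractionalNorm

section SimultaneousApproximation

variable {ξ : K Fq} {n : ℕ}

lemma fracNorm_le_maxFrac {i : ℕ} (hi : i ∈ Set.Icc 1 n) (R : Polynomial Fq) :
    fracNorm Fq (emb Fq R * ξ ^ i) ≤ maxFrac Fq ξ n R :=
  le_csSup ((Set.finite_Icc 1 n).image _).bddAbove ⟨i, hi, rfl⟩

lemma exists_maxFrac_eq (hn : 1 ≤ n) (ξ : K Fq) (R : Polynomial Fq) :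
    ∃ i ∈ Set.Icc 1 n, maxFrac Fq ξ n R = fracNorm Fq (emb Fq R * ξ ^ i) := by
  obtain ⟨i, hi, h⟩ := ((Set.nonempty_Icc.mpr hn).image
    fun i => fracNorm Fq (emb Fq R * ξ ^ i)).csSup_mem ((Set.finite_Icc 1 n).image _)
  exact ⟨i, hi, h.symm⟩

lemma maxFrac_nonneg (ξ : K Fq) (n : ℕ) (R : Polynomial Fq) : 0 ≤ maxFrac Fq ξ n R :=
  Real.sSup_nonneg fun _ ⟨_, _, h⟩ => h ▸ fracNorm_nonneg _

lemma maxFrac_lt_one (hn : 1 ≤ n) (ξ : K Fq) (R : Polynomial Fq) : maxFrac Fq ξ n R < 1 := by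
  obtain ⟨i, -, h⟩ := exists_maxFrac_eq hn ξ R
  exact h ▸ fracNorm_lt_one _

lemma maxFrac_pow_char (p : ℕ) [Fact p.Prime] [CharP Fq p] (hn : 1 ≤ n) (R : Polynomial Fq) :
    maxFrac Fq (ξ ^ p) n (R ^ p) = maxFrac Fq ξ n R ^ p := by
  have hfrac : ∀ i, fracNorm Fq (emb Fq (R ^ p) * (ξ ^ p) ^ i)
      = fracNorm Fq (emb Fq R * ξ ^ i) ^ p := fun i => by
    rw [map_pow, ← pow_mul, mul_comm p i, pow_mul, ← mul_pow, fracNorm_pow_char]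
  obtain ⟨i, hi, hmax⟩ := exists_maxFrac_eq hn (ξ ^ p) (R ^ p)
  obtain ⟨j, hj, hmax'⟩ := exists_maxFrac_eq hn ξ R
  refine le_antisymm ?_ ?_
  · rw [hmax, hfrac]
    exact pow_le_pow_left₀ (fracNorm_nonneg _) (fracNorm_le_maxFrac hi R) p
  · rw [hmax', ← hfrac]
    exact fracNorm_le_maxFrac hj (R ^ p)

lemma maxFrac_eq_zero_iff {R : Polynomial Fq} :
    maxFrac Fq ξ n R = 0 ↔ R ∈ denominators ξ n := by
  refine ⟨fun h i hi => fracNorm_eq_zero_iff.mp (le_antisymm ?_ (fracNorm_nonneg _)),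
    fun h => le_antisymm (Real.sSup_nonpos ?_) (maxFrac_nonneg ξ n R)⟩
  · exact h ▸ fracNorm_le_maxFrac hi R
  · rintro _ ⟨i, hi, rfl⟩
    exact (fracNorm_eq_zero_iff.mpr (h i hi)).le

variable (ξ n) in
def approxSet (l : ℝ) : Set (Polynomial Fq) :=
  {R | 0 < maxFrac Fq ξ n R ∧
    maxFrac Fq ξ n R < (Fintype.card Fq : ℝ) ^ (-(l * R.natDegree))}

lemma mem_lamSet_iff {l : ℝ} : l ∈ lamSet Fq ξ n ↔ (approxSet ξ n l).Infinite := Iff.rfl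

lemma approxSet_of_nonpos (hn : 1 ≤ n) {l : ℝ} (hl : l ≤ 0) :
    approxSet ξ n l = (denominators ξ n : Set (Polynomial Fq))ᶜ := by
  ext R
  simp only [approxSet, Set.mem_ofPred_eq, Set.mem_compl_iff, SetLike.mem_coe,
    ← maxFrac_eq_zero_iff]
  refine ⟨fun h => h.1.ne', fun h => ⟨(maxFrac_nonneg ξ n R).lt_of_ne' h, ?_⟩⟩
  refine (maxFrac_lt_one hn ξ R).trans_le (Real.one_le_rpow (one_lt_card Fq).le ?_)
  nlinarith [(Nat.cast_nonneg R.natDegree : (0 : ℝ) ≤ R.natDegree)]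

-- A common denominator `B` forces `max_i ‖R ξ^i‖ ≥ |B|⁻¹` as soon as it is nonzero.
lemma finite_approxSet_of_mem_denominators (hn : 1 ≤ n) {B : Polynomial Fq}
    (hB : B ∈ denominators ξ n) (hB0 : B ≠ 0) {l : ℝ} (hl : 0 < l) :
    (approxSet ξ n l).Finite := by
  have hq : (0 : ℝ) ≤ Fintype.card Fq := Nat.cast_nonneg _
  have hemb : emb Fq B ≠ 0 := (map_ne_zero_iff _ emb_injective).mpr hB0
  obtain ⟨D, hD⟩ := pow_unbounded_of_one_lt (absK Fq (emb Fq B))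
    (Real.one_lt_rpow (one_lt_card Fq) hl)
  refine (finite_setOf_natDegree_le D).subset fun R ⟨hpos, hlt⟩ => ?_
  obtain ⟨i, hi, hmax⟩ := exists_maxFrac_eq hn ξ R
  have hfrac : emb Fq R * ξ ^ i ∉ integralSubring := fun h =>
    hpos.ne' (hmax.trans (fracNorm_eq_zero_iff.mpr h))
  have hlow := inv_absK_le_fracNorm (emb_mem_integralSubring B) hemb
    (by rw [mul_left_comm]; exact mul_mem (emb_mem_integralSubring R) (hB i hi)) hfrac
  rw [← hmax] at hlow
  rw [Real.rpow_neg hq, Real.rpow_mul_natCast hq] at hlt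
  have hpow : ((Fintype.card Fq : ℝ) ^ l) ^ R.natDegree < absK Fq (emb Fq B) :=
    (inv_lt_inv₀ (absK_pos hemb) (by positivity)).mp (hlow.trans_lt hlt)
  by_contra hdeg
  exact (hD.trans (hpow.trans_le' (pow_le_pow_right₀ (Real.one_lt_rpow (one_lt_card Fq) hl).le
    (not_le.mp hdeg).le))).false

variable (p : ℕ) [Fact p.Prime] [CharP Fq p]

lemma pow_mem_approxSet (hn : 1 ≤ n) {l : ℝ} {R : Polynomial Fq} (hR : R ∈ approxSet ξ n l) :
    R ^ p ∈ approxSet (ξ ^ p) n l := by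
  have hq : (0 : ℝ) ≤ Fintype.card Fq := Nat.cast_nonneg _
  refine ⟨maxFrac_pow_char p hn R ▸ pow_pos hR.1 p, ?_⟩
  rw [maxFrac_pow_char p hn R, natDegree_pow, Nat.cast_mul,
    show -(l * (p * R.natDegree)) = -(l * R.natDegree) * p by ring, Real.rpow_mul_natCast hq]
  exact pow_lt_pow_left₀ hR.2 (maxFrac_nonneg ξ n R) (Fact.out : p.Prime).ne_zero

lemma lamSet_subset_lamSet_pow (hn : 1 ≤ n) : lamSet Fq ξ n ⊆ lamSet Fq (ξ ^ p) n :=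
  fun _ hl => (hl.image (frobenius_inj (Polynomial Fq) p).injOn).mono
    (Set.image_subset_iff.mpr fun _ hR => pow_mem_approxSet p hn hR)

lemma emb_mul_pow_pow_eq_sum (R : Polynomial Fq) (ξ : K Fq) (i : ℕ) :
    emb Fq R * (ξ ^ p) ^ i =
      ∑ k ∈ Finset.range p, Tvar Fq ^ k * (emb Fq (R.pthRootPart p k) * ξ ^ i) ^ p := by
  conv_lhs => rw [← R.sum_X_pow_mul_pthRootPart_pow p]
  rw [map_sum, Finset.sum_mul]
  refine Finset.sum_congr rfl fun k _ => ?_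
  rw [map_mul, map_pow, map_pow, emb_X]
  ring

lemma pthRootPart_mem_approxSet (hn : 1 ≤ n) (hden : denominators ξ n = ⊥) {l : ℝ}
    (hl : 0 ≤ l) {R : Polynomial Fq} (hR : R ∈ approxSet (ξ ^ p) n l) {k : ℕ} (hk : k < p) :
    R.pthRootPart p k ∈ insert 0 (approxSet ξ n l) := by
  set S := R.pthRootPart p k
  rcases eq_or_ne S 0 with hS | hS
  · exact Or.inl hS
  have hpos : 0 < maxFrac Fq ξ n S := (maxFrac_nonneg ξ n S).lt_of_ne' fun h =>
    hS (by simpa [hden] using maxFrac_eq_zero_iff.mp h)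
  obtain ⟨i, hi, hmax⟩ := exists_maxFrac_eq hn ξ S
  have hpow : maxFrac Fq ξ n S ^ p ≤ maxFrac Fq (ξ ^ p) n R := by
    rw [hmax]
    refine (fracNorm_pow_le_fracNorm_sum p
      (fun j => emb Fq (R.pthRootPart p j) * ξ ^ i) hk).trans ?_
    rw [← emb_mul_pow_pow_eq_sum]
    exact fracNorm_le_maxFrac hi R
  have hq : (0 : ℝ) ≤ Fintype.card Fq := Nat.cast_nonneg _
  have hdeg : l * (p * S.natDegree : ℕ) ≤ l * R.natDegree :=
    mul_le_mul_of_nonneg_left (Nat.cast_le.mpr (R.mul_natDegree_pthRootPart_le p k)) hl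
  refine Or.inr ⟨hpos, lt_of_pow_lt_pow_left₀ p (by positivity) ?_⟩
  calc maxFrac Fq ξ n S ^ p ≤ maxFrac Fq (ξ ^ p) n R := hpow
    _ < (Fintype.card Fq : ℝ) ^ (-(l * R.natDegree)) := hR.2
    _ ≤ (Fintype.card Fq : ℝ) ^ (-(l * S.natDegree) * p) :=
        Real.rpow_le_rpow_of_exponent_le (one_lt_card Fq).le (by push_cast at hdeg; linarith)
    _ = ((Fintype.card Fq : ℝ) ^ (-(l * S.natDegree))) ^ p := Real.rpow_mul_natCast hq _ _

lemma approxSet_pow_subset (hn : 1 ≤ n) (hden : denominators ξ n = ⊥) {l : ℝ}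
    (hl : 0 ≤ l) :
    approxSet (ξ ^ p) n l ⊆
      (fun c : Fin p → Polynomial Fq => ∑ k : Fin p, X ^ (k : ℕ) * c k ^ p) ''
        Set.univ.pi fun _ => insert 0 (approxSet ξ n l) := fun R hR =>
  ⟨fun k => R.pthRootPart p k, fun k _ => pthRootPart_mem_approxSet p hn hden hl hR k.2, by
    simpa [Fin.sum_univ_eq_sum_range (fun k => X ^ k * R.pthRootPart p k ^ p)] using
      R.sum_X_pow_mul_pthRootPart_pow p⟩

lemma lamSet_pow_subset_lamSet (hn : 1 ≤ n) : lamSet Fq (ξ ^ p) n ⊆ lamSet Fq ξ n := by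
  intro l hl
  rw [mem_lamSet_iff] at hl ⊢
  rcases le_or_gt l 0 with hl0 | hl0
  · rw [approxSet_of_nonpos hn hl0]
    refine AddSubgroup.infinite_compl fun htop => ?_
    rw [approxSet_of_nonpos hn hl0, denominators_pow_eq_top hn htop] at hl
    simp at hl
  intro hfin
  rcases eq_or_ne (denominators ξ n) ⊥ with hden | hden
  · exact hl ((Set.Finite.pi fun _ => hfin.insert 0).image _ |>.subset
      (approxSet_pow_subset p hn hden hl0.le))
  · obtain ⟨⟨B, hB⟩, hB0⟩ := AddSubgroup.ne_bot_iff_exists_ne_zero.mp hden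
    exact hl (finite_approxSet_of_mem_denominators hn (pow_mem_denominators_pow hB p)
      (pow_ne_zero p fun h => hB0 (Subtype.ext h)) hl0)

lemma lamSet_pow_char (hn : 1 ≤ n) : lamSet Fq (ξ ^ p) n = lamSet Fq ξ n :=
  (lamSet_pow_subset_lamSet p hn).antisymm (lamSet_subset_lamSet_pow p hn)

end SimultaneousApproximation

/-- `λ_n(ξ) = λ_n(ξ^p)`. -/
theorem lam_frobenius (p : ℕ) [Fact p.Prime] (Fq : Type) [Field Fq] [Fintype Fq] [CharP Fq p]
    (ξ : K Fq) (n : ℕ) (hn : 1 ≤ n) :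
    lam Fq ξ n = lam Fq (ξ ^ p) n := by
  rw [lam, lam, lamSet_pow_char p hn]

end
end MahlerKoksmaFq
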